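/- arXiv:2510.11767 — 5 statements merged into one kernel-verified Lean document; each statement's English description precedes it below -/
import Mathlib

section
/- Let φ = (1+√5)/2. If n and m are nonnegative integers with ⌊nφ⌋ - 2 ≤ ⌊m(φ+1)⌋ ≤ ⌊nφ⌋ - 1, then m = ⌊n/φ⌋. -/
/-!
Since `1 / φ = φ - 1`, the number `q = ⌊n / φ⌋` equals `⌊n φ⌋ - n`, and then
`q (φ + 1) = ⌊n φ⌋ - φ {n φ}` lies just below `⌊n φ⌋`, strictly so for `n ≠ 0` by irrationality of
`φ`. The hypotheses say that `m (φ + 1)` also lies below `⌊n φ⌋` but not by more than `2`, which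
forces `m ≤ q`; as `φ + 1 > 2`, the floors of distinct multiples of `φ + 1` are at least `2` apart,
so `m < q` would push `⌊m (φ + 1)⌋` below `⌊n φ⌋ - 2`.
-/

noncomputable def phi : ℝ := (1 + Real.sqrt 5) / 2

open Real goldenRatio

theorem Int.floor_intCast_mul_add_two_le {α : ℝ} (hα : 2 ≤ α) {a b : ℤ} (hab : a < b) :
    ⌊a * α⌋ + 2 ≤ ⌊b * α⌋ := by
  have hab' : (a : ℝ) + 1 ≤ b := by exact_mod_cast hab
  rw [← Int.floor_add_intCast, Int.cast_ofNat]
  exact Int.floor_le_floor (by nlinarith)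

namespace Real

theorem floor_intCast_div_goldenRatio (n : ℤ) : ⌊n / φ⌋ = ⌊n * φ⌋ - n := by
  have h : (n : ℝ) / φ = n * φ - n := by
    rw [div_eq_mul_inv, inv_goldenRatio, ← one_sub_goldenRatio]
    ring
  rw [h, Int.floor_sub_intCast]

theorem floor_intCast_div_goldenRatio_mul_lt {n : ℤ} (hn : n ≠ 0) :
    (⌊n / φ⌋ : ℝ) * (φ + 1) < ⌊n * φ⌋ := by
  have hlt : (⌊n * φ⌋ : ℝ) < n * φ :=
    (Int.floor_le _).lt_of_ne ((goldenRatio_irrational.intCast_mul hn).ne_int _).symm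
  rw [floor_intCast_div_goldenRatio, Int.cast_sub]
  linear_combination φ * hlt + (n : ℝ) * goldenRatio_sq

theorem le_floor_intCast_div_goldenRatio {m n : ℤ} (h : ⌊m * (φ + 1)⌋ < ⌊n * φ⌋) :
    m ≤ ⌊n / φ⌋ := by
  have hlt : m * φ * φ < n * φ := by
    rw [mul_assoc, ← sq, goldenRatio_sq]
    exact (Int.floor_lt.1 h).trans_le (Int.floor_le _)
  rw [Int.le_floor, le_div_iff₀ goldenRatio_pos]
  exact (lt_of_mul_lt_mul_right hlt goldenRatio_pos.le).le

end Real

theorem stmt6 (n m : ℕ)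
    (h1 : ⌊(n : ℝ) * phi⌋ - 2 ≤ ⌊(m : ℝ) * (phi + 1)⌋)
    (h2 : ⌊(m : ℝ) * (phi + 1)⌋ ≤ ⌊(n : ℝ) * phi⌋ - 1) :
    (m : ℤ) = ⌊(n : ℝ) / phi⌋ := by
  rw [show phi = φ from rfl] at h1 h2 ⊢
  have hle := le_floor_intCast_div_goldenRatio (m := m) (n := n) (by push_cast; omega)
  rcases Nat.eq_zero_or_pos n with rfl | hn
  · simp only [Nat.cast_zero, Int.cast_zero, zero_div, Int.floor_zero] at hle ⊢
    omega
  refine hle.antisymm (not_lt.1 fun hlt => ?_)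
  have hgap := Int.floor_intCast_mul_add_two_le (α := φ + 1) (by linarith [one_lt_goldenRatio]) hlt
  have hq := Int.floor_lt.2 (floor_intCast_div_goldenRatio_mul_lt (by omega : (n : ℤ) ≠ 0))
  push_cast at *
  omega
end

section
/- Hofstadter's G-sequence h, defined by h(0) = 0 and h(n) = n - h(h(n-1)) for n ≥ 1, satisfies h(n) = ⌊(n+1)/φ⌋ for all nonnegative integers n, where φ = (1+√5)/2. -/
/-!
Put `α = φ⁻¹`, so that `α² = 1 - α`, and `g k = ⌊(k + 1) α⌋`. For `n ≥ 0` let `m = ⌊n α⌋ = g (n - 1)`.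
Since `α < 1`, `g n` is `m` or `m + 1`, according as `(n + 1) α` lies below or above `m + 1`
(equality is excluded by irrationality). Multiplying the defining inequalities by `α` and
using `α² = 1 - α` turns either case into `g m = n - g n`, which is the recursion
`g n = n - g (g (n - 1))`. The recursion determines `h` by strong induction, as `h (n - 1) < n`.
-/

open Real
open scoped goldenRatio

theorem phi_eq_goldenRatio : phi = φ := rfl

theorem inv_goldenRatio_sq : φ⁻¹ ^ 2 = 1 - φ⁻¹ := by
  rw [inv_goldenRatio, neg_sq, goldenConj_sq]
  ring

theorem inv_goldenRatio_lt_one : φ⁻¹ < 1 :=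
  inv_lt_one_of_one_lt₀ one_lt_goldenRatio

theorem half_lt_inv_goldenRatio : 2⁻¹ < φ⁻¹ :=
  inv_strictAnti₀ goldenRatio_pos goldenRatio_lt_two

noncomputable def goldenFloor (k : ℤ) : ℤ := ⌊(k + 1) * φ⁻¹⌋

theorem goldenFloor_zero : goldenFloor 0 = 0 := by
  rw [goldenFloor, Int.cast_zero, zero_add, one_mul, Int.floor_eq_zero_iff]
  exact ⟨(inv_pos.2 goldenRatio_pos).le, inv_goldenRatio_lt_one⟩

theorem goldenFloor_goldenFloor_sub_one {n : ℤ} (hn : 0 ≤ n) :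
    goldenFloor (goldenFloor (n - 1)) = n - goldenFloor n := by
  unfold goldenFloor
  generalize hα : φ⁻¹ = α
  have hsq : α ^ 2 = 1 - α := hα ▸ inv_goldenRatio_sq
  have hpos : 0 < α := hα ▸ inv_pos.2 goldenRatio_pos
  have hlt : α < 1 := hα ▸ inv_goldenRatio_lt_one
  have hhalf : 2⁻¹ < α := hα ▸ half_lt_inv_goldenRatio
  have hirr : Irrational α := hα ▸ goldenRatio_irrational.inv
  push_cast
  rw [sub_add_cancel]
  set m := ⌊(n : ℝ) * α⌋ with hm
  have hm_le : (m : ℝ) ≤ n * α := hm ▸ Int.floor_le _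
  have hm_lt : (n : ℝ) * α < m + 1 := hm ▸ Int.lt_floor_add_one _
  -- After multiplication by `α`, a bound on `(m + 1) α + m + 1` becomes one on `m + 1`.
  have hkey : α * (((m : ℝ) + 1) * α + (m + 1)) = m + 1 := by
    linear_combination (↑m + 1) * hsq
  have hne : ((n : ℝ) + 1) * α ≠ m + 1 := by
    have := (hirr.intCast_mul (m := n + 1) (by omega)).ne_int (m + 1)
    exact_mod_cast this
  rcases hne.lt_or_gt with hbelow | habove
  · have hk : ⌊((n : ℝ) + 1) * α⌋ = m := by
      rw [Int.floor_eq_iff]; constructor <;> nlinarith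
    rw [hk, Int.floor_eq_iff]; push_cast
    constructor <;> nlinarith
  · have hk : ⌊((n : ℝ) + 1) * α⌋ = m + 1 := by
      rw [Int.floor_eq_iff]; push_cast; constructor <;> nlinarith
    rw [hk, Int.floor_eq_iff]; push_cast
    constructor <;> nlinarith

theorem le_self_of_rec {h : ℕ → ℕ} (h0 : h 0 = 0)
    (hrec : ∀ n : ℕ, 1 ≤ n → h n = n - h (h (n - 1))) (n : ℕ) : h n ≤ n := by
  rcases n with _ | n
  · exact h0.le
  · rw [hrec _ n.succ_pos]
    exact Nat.sub_le _ _

theorem natCast_eq_goldenFloor_of_rec {h : ℕ → ℕ} (h0 : h 0 = 0)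
    (hrec : ∀ n : ℕ, 1 ≤ n → h n = n - h (h (n - 1))) (n : ℕ) : (h n : ℤ) = goldenFloor n := by
  induction n using Nat.strong_induction_on with
  | _ n ih =>
  rcases n with _ | n
  · rw [h0, Nat.cast_zero, goldenFloor_zero]
  · have hprev : (h n : ℤ) = goldenFloor n := ih n n.lt_succ_self
    have hprev' : (h (h n) : ℤ) = goldenFloor (goldenFloor n) := by
      rw [ih _ (Nat.lt_succ_of_le (le_self_of_rec h0 hrec n)), hprev]
    have hstep := goldenFloor_goldenFloor_sub_one (n := (n : ℤ) + 1) (by positivity)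
    rw [add_sub_cancel_right] at hstep
    have hle := (le_self_of_rec h0 hrec (h n)).trans (le_self_of_rec h0 hrec n)
    rw [hrec (n + 1) n.succ_pos, Nat.add_sub_cancel, Nat.cast_succ]
    omega

theorem stmt7 (h : ℕ → ℕ) (h0 : h 0 = 0)
    (hrec : ∀ n : ℕ, 1 ≤ n → h n = n - h (h (n - 1))) :
    ∀ n : ℕ, (h n : ℤ) = ⌊((n : ℝ) + 1) / phi⌋ := by
  intro n
  rw [natCast_eq_goldenFloor_of_rec h0 hrec n, goldenFloor, Int.cast_natCast, phi_eq_goldenRatio,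
    div_eq_mul_inv]
end

section
/- Let φ = (1+√5)/2 and for each positive integer n define f(n) to be the unique nonnegative integer m such that ⌊nφ⌋ - 2 ≤ ⌊m(φ+1)⌋ ≤ ⌊nφ⌋ - 1. Then for n ≥ 2, f(n) > f(n-1) if and only if there exists a nonnegative integer m with ⌊nφ⌋ = ⌊m(φ+1)⌋ + 1. -/
/-!
Write `a k = ⌊k φ⌋` and `b m = ⌊m (φ + 1)⌋`, so that `f n` indexes the unique `b`-value in
`[a n - 2, a n - 1]` (`b` grows in steps of at least 2). If `f (n - 1) < f n` and this value is
`a n - 2`, then `a (n - 1) ≤ a n - 2`, so `a n - 1` lies strictly between two consecutive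
`a`-values; by Rayleigh's theorem it is then a `b`-value. Conversely, if `a n - 1 = b m`, then
`b (f n) = a n - 1`, which exceeds `b (f (n - 1)) ≤ a (n - 1) - 1`.
-/

open Real
open scoped symmDiff

theorem lt_iff_exists_eq_add_one_of_complementary {a b : ℕ → ℤ} (ha : StrictMono a)
    (hb : ∀ ⦃i j⦄, i < j → b i + 2 ≤ b j)
    (hcover : ∀ j : ℤ, 0 < j → (∃ i, a i = j) ∨ ∃ m, b m = j)
    {k p q : ℕ} (hak : 0 ≤ a k)
    (hp : a k - 2 ≤ b p ∧ b p ≤ a k - 1) (hq : a (k + 1) - 2 ≤ b q ∧ b q ≤ a (k + 1) - 1) :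
    p < q ↔ ∃ m, a (k + 1) = b m + 1 := by
  constructor
  · intro hpq
    have hbpq := hb hpq
    by_cases hq_top : b q = a (k + 1) - 1
    · exact ⟨q, by omega⟩
    obtain ⟨i, hi⟩ | ⟨m, hm⟩ := hcover (a (k + 1) - 1) (by omega)
    · have hki : k < i := ha.lt_iff_lt.mp (by omega)
      have hik : i < k + 1 := ha.lt_iff_lt.mp (by omega)
      omega
    · exact ⟨m, by omega⟩
  · rintro ⟨m, hm⟩
    have hqm : q = m := by
      rcases lt_trichotomy q m with h | h | h
      · have := hb h; omega
      · exact h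
      · have := hb h; omega
    subst hqm
    have hak_lt : a k < a (k + 1) := ha (Nat.lt_succ_self k)
    by_contra! hqp
    rcases hqp.lt_or_eq with h | rfl
    · have := hb h; omega
    · omega

theorem floor_natCast_mul_add_floor_le_of_lt {R : Type*} [Field R] [LinearOrder R]
    [IsStrictOrderedRing R] [FloorRing R] {α : R} (hα : 0 ≤ α) {k l : ℕ} (hkl : k < l) :
    ⌊(k : R) * α⌋ + ⌊α⌋ ≤ ⌊(l : R) * α⌋ :=
  calc ⌊(k : R) * α⌋ + ⌊α⌋ ≤ ⌊(k : R) * α + α⌋ := Int.le_floor_add _ _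
    _ ≤ ⌊(l : R) * α⌋ := by
      gcongr
      calc (k : R) * α + α = ((k + 1 : ℕ) : R) * α := by push_cast; ring
        _ ≤ (l : R) * α := by gcongr; exact hkl

theorem phi_pos : 0 < phi := goldenRatio_pos

theorem phi_sq : phi ^ 2 = phi + 1 := goldenRatio_sq

theorem floor_phi : ⌊phi⌋ = 1 :=
  Int.floor_eq_iff.2 ⟨by exact_mod_cast one_lt_goldenRatio.le, by exact_mod_cast goldenRatio_lt_two⟩

theorem floor_phi_add_one : ⌊phi + 1⌋ = 2 := by
  rw [Int.floor_add_one, floor_phi]; rfl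

theorem strictMono_floor_natCast_mul_phi : StrictMono fun k : ℕ ↦ ⌊(k : ℝ) * phi⌋ := by
  intro k l hkl
  have := floor_natCast_mul_add_floor_le_of_lt phi_pos.le hkl
  rw [floor_phi] at this
  exact Int.lt_of_add_one_le this

theorem floor_natCast_mul_phi_add_one_add_two_le ⦃i j : ℕ⦄ (hij : i < j) :
    ⌊(i : ℝ) * (phi + 1)⌋ + 2 ≤ ⌊(j : ℝ) * (phi + 1)⌋ := by
  have := floor_natCast_mul_add_floor_le_of_lt (add_pos phi_pos one_pos).le hij
  rwa [floor_phi_add_one] at this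

theorem phi_holderConjugate : phi.HolderConjugate (phi + 1) := by
  refine (holderConjugate_iff_eq_conjExponent (p := phi) one_lt_goldenRatio).2 ?_
  have hsub : phi - 1 ≠ 0 := sub_ne_zero.2 one_lt_goldenRatio.ne'
  field_simp
  linear_combination phi_sq

theorem exists_floor_natCast_mul_phi_or_phi_add_one_eq (j : ℤ) (hj : 0 < j) :
    (∃ k : ℕ, ⌊(k : ℝ) * phi⌋ = j) ∨ ∃ m : ℕ, ⌊(m : ℝ) * (phi + 1)⌋ = j := by
  have hj' : j ∈ {beattySeq phi k | k > 0} ∆ {beattySeq (phi + 1) k | k > 0} := by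
    rw [Irrational.beattySeq_symmDiff_beattySeq_pos phi_holderConjugate goldenRatio_irrational]
    exact hj
  rcases Set.mem_symmDiff.1 hj' with ⟨⟨k, hk, rfl⟩, -⟩ | ⟨⟨m, hm, rfl⟩, -⟩
  · lift k to ℕ using hk.le
    exact Or.inl ⟨k, rfl⟩
  · lift m to ℕ using hm.le
    exact Or.inr ⟨m, rfl⟩

theorem stmt8 (f : ℕ → ℕ)
    (hf : ∀ n : ℕ, 1 ≤ n →
      ⌊(n : ℝ) * phi⌋ - 2 ≤ ⌊((f n : ℕ) : ℝ) * (phi + 1)⌋ ∧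
      ⌊((f n : ℕ) : ℝ) * (phi + 1)⌋ ≤ ⌊(n : ℝ) * phi⌋ - 1) :
    ∀ n : ℕ, 2 ≤ n →
      (f n > f (n - 1) ↔ ∃ m : ℕ, ⌊(n : ℝ) * phi⌋ = ⌊(m : ℝ) * (phi + 1)⌋ + 1) := by
  intro n hn
  obtain ⟨k, rfl⟩ : ∃ k, n = k + 1 := ⟨n - 1, by omega⟩
  rw [Nat.add_sub_cancel]
  exact lt_iff_exists_eq_add_one_of_complementary
    (a := fun k : ℕ ↦ ⌊(k : ℝ) * phi⌋) (b := fun m : ℕ ↦ ⌊(m : ℝ) * (phi + 1)⌋)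
    strictMono_floor_natCast_mul_phi floor_natCast_mul_phi_add_one_add_two_le
    exists_floor_natCast_mul_phi_or_phi_add_one_eq
    (Int.floor_nonneg.2 (mul_nonneg k.cast_nonneg phi_pos.le))
    (hf k (by omega)) (hf (k + 1) le_add_self)
end

section
/- Let φ = (1+√5)/2, define g : ℕ → {0,1} by g(0)=1, g(1)=0, and for n ≥ 2: g(n) = 1 - g(m) if there exists m ∈ ℕ with ⌊nφ⌋ = ⌊m(φ+1)⌋ + 1, and g(n) = 1 otherwise. Let h be Hofstadter's G-sequence (h(0)=0, h(n)=n-h(h(n-1))). Then for all n ≥ 2: g(n) = 1 - g(h(n-1)) if h(n-2) < h(n-1), and g(n) = 1 otherwise. -/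
/-- The recursive specification of the {0,1}-valued function g. -/
def gSpec (g : ℕ → ℕ) : Prop :=
  g 0 = 1 ∧ g 1 = 0 ∧ (∀ n, g n ≤ 1) ∧
  ∀ n : ℕ, 2 ≤ n →
    (∀ m : ℕ, ⌊(n : ℝ) * phi⌋ = ⌊(m : ℝ) * (phi + 1)⌋ + 1 → g n = 1 - g m) ∧
    ((¬ ∃ m : ℕ, ⌊(n : ℝ) * phi⌋ = ⌊(m : ℝ) * (phi + 1)⌋ + 1) → g n = 1)

open Real goldenRatio

theorem inv_goldenRatio_eq_sub_one : φ⁻¹ = φ - 1 := by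
  rw [inv_goldenRatio, ← one_sub_goldenConj]; ring

theorem irrational_natCast_div_goldenRatio {n : ℕ} (hn : n ≠ 0) : Irrational (n / φ) :=
  goldenRatio_irrational.inv.natCast_mul hn

theorem floor_add_inv_goldenRatio_add_floor {f : ℝ} (hf0 : 0 ≤ f) (hf1 : f < 1)
    (hf : f + φ⁻¹ ≠ 1) : ⌊f + φ⁻¹⌋ + ⌊φ⁻¹ - f * φ⌋ = 0 := by
  rw [inv_goldenRatio_eq_sub_one] at hf ⊢
  have hsq := goldenRatio_sq
  have h1 := one_lt_goldenRatio
  have h2 := goldenRatio_lt_two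
  rcases hf.lt_or_gt with hlt | hgt
  · have := mul_lt_mul_of_pos_right hlt goldenRatio_pos
    rw [show ⌊f + (φ - 1)⌋ = 0 by rw [Int.floor_eq_iff]; constructor <;> push_cast <;> nlinarith,
      show ⌊φ - 1 - f * φ⌋ = 0 by rw [Int.floor_eq_iff]; constructor <;> push_cast <;> nlinarith]
    rfl
  · have := mul_lt_mul_of_pos_right hgt goldenRatio_pos
    rw [show ⌊f + (φ - 1)⌋ = 1 by rw [Int.floor_eq_iff]; constructor <;> push_cast <;> nlinarith,
      show ⌊φ - 1 - f * φ⌋ = -1 by rw [Int.floor_eq_iff]; constructor <;> push_cast <;> nlinarith]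
    rfl

noncomputable def hofG (n : ℕ) : ℕ := ⌊(n + 1 : ℝ) / φ⌋₊

theorem intCast_hofG (n : ℕ) : (hofG n : ℤ) = ⌊(n + 1 : ℝ) / φ⌋ :=
  Int.natCast_floor_eq_floor (by positivity)

theorem hofG_le_self (n : ℕ) : hofG n ≤ n := by
  rw [hofG, ← Nat.lt_add_one_iff, Nat.floor_lt (by positivity), div_lt_iff₀ goldenRatio_pos]
  push_cast
  nlinarith [one_lt_goldenRatio]

theorem hofG_lt (n : ℕ) : (hofG n : ℝ) < (n + 1) / φ := by
  refine (Nat.floor_le (by positivity)).lt_of_ne fun h => ?_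
  exact (irrational_natCast_div_goldenRatio n.succ_ne_zero).ne_nat _ (by push_cast; exact h.symm)

theorem hofG_zero : hofG 0 = 0 := Nat.eq_zero_of_le_zero (hofG_le_self 0)

theorem hofG_hofG_add_hofG_succ (m : ℕ) : hofG (hofG m) + hofG (m + 1) = m + 1 := by
  obtain ⟨x, hx⟩ : ∃ x, (m + 1 : ℝ) / φ = x := ⟨_, rfl⟩
  have hxφ : x * φ = m + 1 := by rw [← hx, div_mul_cancel₀ _ goldenRatio_ne_zero]
  have hfloor : (hofG m : ℝ) = ⌊x⌋ := by rw [← hx]; exact_mod_cast intCast_hofG m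
  have hsucc : ((m + 1 : ℕ) + 1 : ℝ) / φ = ⌊x⌋ + (Int.fract x + φ⁻¹) := by
    rw [← add_assoc, Int.floor_add_fract, ← hx]; push_cast; ring
  have hhofG : ((hofG m : ℕ) + 1 : ℝ) / φ = ((m + 1 - ⌊x⌋ : ℤ) : ℝ) + (φ⁻¹ - Int.fract x * φ) := by
    rw [div_eq_iff goldenRatio_ne_zero, Int.fract, hfloor]
    push_cast
    linear_combination φ * hxφ - inv_mul_cancel₀ goldenRatio_ne_zero - ⌊x⌋ * goldenRatio_sq
  have hne : Int.fract x + φ⁻¹ ≠ 1 := by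
    intro h
    apply (irrational_natCast_div_goldenRatio (n := m + 2) (by omega)).ne_int (⌊x⌋ + 1)
    rw [show ((m + 2 : ℕ) : ℝ) = ((m + 1 : ℕ) : ℝ) + 1 by push_cast; ring, hsucc, h]
    push_cast; ring
  zify
  rw [intCast_hofG, intCast_hofG, hsucc, hhofG, Int.floor_intCast_add, Int.floor_intCast_add]
  linear_combination floor_add_inv_goldenRatio_add_floor (Int.fract_nonneg x) (Int.fract_lt_one x) hne

theorem eq_hofG {h : ℕ → ℕ} (h0 : h 0 = 0) (hrec : ∀ n, 1 ≤ n → h n = n - h (h (n - 1))) :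
    h = hofG := by
  funext n
  induction n using Nat.strong_induction_on with
  | _ n ih =>
    match n with
    | 0 => rw [h0, hofG_zero]
    | m + 1 =>
      have hm : h m = hofG m := ih m (by omega)
      have hhm : h (hofG m) = hofG (hofG m) := ih _ (by have := hofG_le_self m; omega)
      rw [hrec (m + 1) (by omega), Nat.add_sub_cancel, hm, hhm]
      have := hofG_hofG_add_hofG_succ m
      omega

theorem floor_natCast_mul_goldenRatio (n : ℕ) : ⌊(n : ℝ) * φ⌋ = n + ⌊(n : ℝ) / φ⌋ := by
  rw [← Int.floor_natCast_add, div_eq_mul_inv, inv_goldenRatio, ← one_sub_goldenRatio]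
  ring_nf

theorem hofG_lt_hofG_succ_iff (k : ℕ) :
    hofG k < hofG (k + 1) ↔ ⌊(hofG (k + 1) : ℝ) * φ⌋ = k + 1 := by
  have hφ := goldenRatio_pos
  have hupper : (hofG (k + 1) : ℝ) * φ < k + 2 := by
    have := hofG_lt (k + 1)
    rw [lt_div_iff₀ hφ] at this
    push_cast at this; linarith
  have hne : (hofG (k + 1) : ℝ) * φ ≠ k + 1 := by
    rcases Nat.eq_zero_or_pos (hofG (k + 1)) with h0 | hpos
    · rw [h0, Nat.cast_zero, zero_mul]; exact (Nat.cast_add_one_pos k).ne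
    · exact_mod_cast (goldenRatio_irrational.natCast_mul hpos.ne').ne_nat (k + 1)
  rw [hofG, Nat.floor_lt (by positivity), div_lt_iff₀ hφ, Int.floor_eq_iff]
  push_cast
  constructor
  · intro h; constructor <;> linarith
  · intro h; exact h.1.lt_of_ne' hne

theorem eq_hofG_succ_of_floor_eq {k m : ℕ}
    (h : ⌊((k + 2 : ℕ) : ℝ) * φ⌋ = ⌊(m : ℝ) * (φ + 1)⌋ + 1) : m = hofG (k + 1) := by
  have hφ := goldenRatio_pos
  have hsq := goldenRatio_sq
  have hlow : (m : ℝ) * (φ + 1) < ((k + 2 : ℕ) : ℝ) * φ := by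
    have := Int.lt_floor_add_one ((m : ℝ) * (φ + 1))
    have := Int.floor_le (((k + 2 : ℕ) : ℝ) * φ)
    rw [h] at this; push_cast at this ⊢; linarith
  have hhigh : ((k + 2 : ℕ) : ℝ) * φ < (m : ℝ) * (φ + 1) + 2 := by
    have := Int.floor_le ((m : ℝ) * (φ + 1))
    have := Int.lt_floor_add_one (((k + 2 : ℕ) : ℝ) * φ)
    rw [h] at this; push_cast at this ⊢; linarith
  symm
  rw [hofG, Nat.floor_eq_iff (by positivity), le_div_iff₀ hφ, div_lt_iff₀ hφ]
  push_cast at hlow hhigh ⊢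
  constructor <;> nlinarith [one_lt_goldenRatio]

theorem floor_mul_goldenRatio_eq_floor_add_one_iff (k m : ℕ) :
    ⌊((k + 2 : ℕ) : ℝ) * φ⌋ = ⌊(m : ℝ) * (φ + 1)⌋ + 1 ↔
      m = hofG (k + 1) ∧ hofG k < hofG (k + 1) := by
  have hlhs : ⌊((k + 2 : ℕ) : ℝ) * φ⌋ = k + 2 + hofG (k + 1) := by
    rw [floor_natCast_mul_goldenRatio, intCast_hofG]; push_cast; ring_nf
  have hrhs : ∀ m : ℕ, ⌊(m : ℝ) * (φ + 1)⌋ = ⌊(m : ℝ) * φ⌋ + m := fun m => by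
    rw [mul_add_one, Int.floor_add_natCast]
  constructor
  · intro h
    obtain rfl := eq_hofG_succ_of_floor_eq h
    rw [hlhs, hrhs] at h
    exact ⟨rfl, (hofG_lt_hofG_succ_iff k).2 (by omega)⟩
  · rintro ⟨rfl, hlt⟩
    rw [hlhs, hrhs, (hofG_lt_hofG_succ_iff k).1 hlt]
    ring

theorem stmt9 (g : ℕ → ℕ) (hg : gSpec g)
    (h : ℕ → ℕ) (h0 : h 0 = 0)
    (hrec : ∀ n : ℕ, 1 ≤ n → h n = n - h (h (n - 1))) :
    ∀ n : ℕ, 2 ≤ n →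
      (h (n - 2) < h (n - 1) → g n = 1 - g (h (n - 1))) ∧
      (¬ h (n - 2) < h (n - 1) → g n = 1) := by
  obtain rfl : h = hofG := eq_hofG h0 hrec
  intro n hn
  obtain ⟨k, rfl⟩ := Nat.exists_eq_add_of_le' hn
  obtain ⟨hsol, hnosol⟩ := hg.2.2.2 (k + 2) hn
  rw [show phi = φ from rfl] at hsol hnosol
  rw [show k + 2 - 2 = k by omega, show k + 2 - 1 = k + 1 by omega]
  refine ⟨fun hlt => hsol _ ((floor_mul_goldenRatio_eq_floor_add_one_iff k _).2 ⟨rfl, hlt⟩),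
    fun hlt => hnosol ?_⟩
  rintro ⟨m, hm⟩
  exact hlt ((floor_mul_goldenRatio_eq_floor_add_one_iff k m).1 hm).2
end

section
/- Let φ = (1+√5)/2, g the {0,1}-valued function with g(0)=1, g(1)=0, and g(n) = 1 - g(m) if ⌊nφ⌋ = ⌊m(φ+1)⌋ + 1 for some m, else g(n) = 1; and set b₁(n) = ⌊nφ⌋ + g(n) - 1, b₂(n) = ⌊n(φ+1)⌋ + g(n). If positive integers n, m satisfy ⌊nφ⌋ = ⌊m(φ+1)⌋ + 1 = ⌊(n-1)φ⌋ + 2, then either (i) b₁(n) = ⌊nφ⌋, b₂(m) = ⌊nφ⌋ - 1, and b₁(n-1) < b₂(m) < b₁(n) < b₂(m+1), or (ii) b₂(m) = ⌊nφ⌋, b₁(n) = ⌊nφ⌋ - 1, b₁(n-1) < b₁(n) < b₂(m), and b₂(m-1) < b₁(n) < b₂(m). -/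
noncomputable def b1 (g : ℕ → ℕ) (n : ℕ) : ℤ := ⌊(n : ℝ) * phi⌋ + g n - 1

noncomputable def b2 (g : ℕ → ℕ) (n : ℕ) : ℤ := ⌊(n : ℝ) * (phi + 1)⌋ + g n

lemma phi_bounds : (3/2 : ℝ) ≤ phi ∧ phi < 2 := by
  have h1 : (2:ℝ) < Real.sqrt 5 := by
    nlinarith [Real.sq_sqrt (by norm_num : (5:ℝ) ≥ 0), Real.sqrt_nonneg 5]
  have h2 : Real.sqrt 5 < 3 := by
    nlinarith [Real.sq_sqrt (by norm_num : (5:ℝ) ≥ 0), Real.sqrt_nonneg 5]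
  unfold phi
  constructor <;> nlinarith

theorem stmt13 (g : ℕ → ℕ) (hg : gSpec g) (n m : ℕ) (hn : 1 ≤ n) (hm : 1 ≤ m)
    (h1 : ⌊(n : ℝ) * phi⌋ = ⌊(m : ℝ) * (phi + 1)⌋ + 1)
    (h2 : ⌊(n : ℝ) * phi⌋ = ⌊((n - 1 : ℕ) : ℝ) * phi⌋ + 2) :
    (b1 g n = ⌊(n : ℝ) * phi⌋ ∧ b2 g m = ⌊(n : ℝ) * phi⌋ - 1 ∧
      b1 g (n - 1) < b2 g m ∧ b2 g m < b1 g n ∧ b1 g n < b2 g (m + 1)) ∨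
    (b2 g m = ⌊(n : ℝ) * phi⌋ ∧ b1 g n = ⌊(n : ℝ) * phi⌋ - 1 ∧
      b1 g (n - 1) < b1 g n ∧ b1 g n < b2 g m ∧
      b2 g (m - 1) < b1 g n) := by
  obtain ⟨hg0, hg1, hgle, hrec⟩ := hg
  obtain ⟨hp1, hp2⟩ := phi_bounds
  -- n ≥ 2
  have hmfl : (2:ℤ) ≤ ⌊(m : ℝ) * (phi + 1)⌋ := by
    apply Int.le_floor.mpr
    have : (1:ℝ) ≤ (m:ℝ) := by exact_mod_cast hm
    push_cast
    nlinarith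
  have h2le : 2 ≤ n := by
    by_contra h
    have hn1 : n = 1 := by omega
    subst hn1
    have : ⌊(1 : ℝ) * phi⌋ < 2 := by
      apply Int.floor_lt.mpr
      push_cast
      linarith
    simp only [Nat.cast_one] at h1
    omega
  -- g n = 1 - g m
  have hgn := (hrec n h2le).1 m h1
  have hgm := hgle m
  have hcast1 : ((n - 1 : ℕ) : ℝ) = (n : ℝ) - 1 := by
    push_cast [Nat.cast_sub hn]; ring
  have hcastm : ((m - 1 : ℕ) : ℝ) = (m : ℝ) - 1 := by
    push_cast [Nat.cast_sub hm]; ring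
  -- floor bounds for m+1 and m-1
  have hA : ⌊(m : ℝ) * (phi + 1)⌋ + 2 ≤ ⌊((m + 1 : ℕ) : ℝ) * (phi + 1)⌋ := by
    have : ((m + 1 : ℕ) : ℝ) * (phi + 1) = (m : ℝ) * (phi + 1) + (phi + 1) := by
      push_cast; ring
    rw [this]
    have h2le' : (m : ℝ) * (phi + 1) + 2 ≤ (m : ℝ) * (phi + 1) + (phi + 1) := by linarith
    calc ⌊(m : ℝ) * (phi + 1)⌋ + 2 = ⌊(m : ℝ) * (phi + 1) + 2⌋ := by
          rw [← Int.floor_add_intCast ((m : ℝ) * (phi + 1)) 2]; norm_num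
      _ ≤ _ := Int.floor_le_floor h2le'
  have hB : ⌊((m - 1 : ℕ) : ℝ) * (phi + 1)⌋ + 2 ≤ ⌊(m : ℝ) * (phi + 1)⌋ := by
    have heq : (m : ℝ) * (phi + 1) = ((m - 1 : ℕ) : ℝ) * (phi + 1) + (phi + 1) := by
      rw [hcastm]; ring
    rw [heq]
    have h2le' : ((m - 1 : ℕ) : ℝ) * (phi + 1) + 2 ≤ ((m - 1 : ℕ) : ℝ) * (phi + 1) + (phi + 1) := by
      linarith
    calc ⌊((m - 1 : ℕ) : ℝ) * (phi + 1)⌋ + 2 = ⌊((m - 1 : ℕ) : ℝ) * (phi + 1) + 2⌋ := by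
          rw [← Int.floor_add_intCast (((m - 1 : ℕ) : ℝ) * (phi + 1)) 2]; norm_num
      _ ≤ _ := Int.floor_le_floor h2le'
  have hgn1 := hgle (n - 1)
  -- case split
  rcases Nat.le_one_iff_eq_zero_or_eq_one.mp hgm with hgm0 | hgm1
  · -- g m = 0, g n = 1
    left
    have hgn' : g n = 1 := by omega
    simp only [b1, b2, hgn', hgm0]
    push_cast at hA hB ⊢
    have hb2m1 : g (m + 1) ≥ 0 := Nat.zero_le _
    refine ⟨by ring, by omega, by omega, by omega, ?_⟩
    have : (0:ℤ) ≤ (g (m+1) : ℤ) := by positivity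
    omega
  · -- g m = 1, g n = 0
    right
    have hgn' : g n = 0 := by omega
    have hgm1' := hgle (m - 1)
    simp only [b1, b2, hgn', hgm1]
    push_cast at hA hB ⊢
    refine ⟨by omega, by omega, by omega, by omega, ?_⟩
    have : (g (m-1) : ℤ) ≤ 1 := by exact_mod_cast hgm1'
    omega
end
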